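/- arXiv:2508.00352 — 2 statements merged into one kernel-verified Lean document; each statement's English description precedes it below -/
import Mathlib

section
/- For λ ≥ 0 and r > 1, the integrand bound [1 − y² + 2λ(y−1)/η_λ(r) + (2 log y)/η_λ(r)²]^{−1/2} ≥ (r² − y²)^{−1/2} holds for all y ∈ (1,r), and consequently Θ_λ(r) := ∫₁^r [1 − y² + 2λ(y−1)/η_λ(r) + (2 log y)/η_λ(r)²]^{−1/2} dy ≥ arcsec(r). -/
/-!
The defining equation of `η = η_λ(r)` says precisely that the radicand
`R(y) = 1 - y² + 2λ(y-1)/η + 2 log y/η²` vanishes at `y = r`. Since the `λ`- and `log`-terms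
increase with `y`, this gives `R(y) ≤ r² - y²`, hence the pointwise bound. Concavity of `log`
(its chord from `1` to `r`) gives `R(y) ≥ (y-1)(r-y)`, so the integrand is dominated by
`((y-1)(r-y))^(-1/2)`, the derivative of `arcsin ((2y-1-r)/(r-1))`, and is integrable.
Integrating the pointwise bound and `∫₁^r (r²-y²)^(-1/2) dy = π/2 - arcsin (1/r)` finishes.
-/

open intervalIntegral Real Set MeasureTheory

noncomputable section

def eta (lam r : ℝ) : ℝ :=
  lam / (r + 1) + √(lam ^ 2 / (r + 1) ^ 2 + 2 * log r / (r ^ 2 - 1))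

def thetaRadicand (lam η y : ℝ) : ℝ :=
  1 - y ^ 2 + 2 * lam * (y - 1) / η + 2 * log y / η ^ 2

end

lemma add_sqrt_sq_eq (b c : ℝ) (h : 0 ≤ b ^ 2 + c) :
    (b + √(b ^ 2 + c)) ^ 2 = 2 * b * (b + √(b ^ 2 + c)) + c := by
  linear_combination Real.sq_sqrt h

lemma antitoneOn_log_div_sub_one : AntitoneOn (fun x ↦ log x / (x - 1)) (Ioi 1) := by
  intro x hx y hy hxy
  have := strictConcaveOn_log_Ioi.concaveOn.neg.secant_mono (a := 1) (mem_Ioi.2 one_pos)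
    (mem_Ioi.2 (one_pos.trans hx)) (mem_Ioi.2 (one_pos.trans hy)) (ne_of_gt hx) (ne_of_gt hy) hxy
  simp only [Pi.neg_apply, log_one, neg_zero, sub_zero, neg_div] at this
  exact neg_le_neg_iff.1 this

section ThetaRadicand

variable {lam r η y : ℝ}

lemma two_mul_log_div_sq_sub_one_pos (hr : 1 < r) : 0 < 2 * log r / (r ^ 2 - 1) :=
  div_pos (by linarith [log_pos hr]) (by nlinarith)

lemma eta_pos (hlam : 0 ≤ lam) (hr : 1 < r) : 0 < eta lam r := by
  have := two_mul_log_div_sq_sub_one_pos hr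
  unfold eta
  positivity

lemma thetaRadicand_eta_self (hlam : 0 ≤ lam) (hr : 1 < r) :
    thetaRadicand lam (eta lam r) r = 0 := by
  have hc := two_mul_log_div_sq_sub_one_pos hr
  have hroot := add_sqrt_sq_eq (lam / (r + 1)) (2 * log r / (r ^ 2 - 1)) (by positivity)
  rw [div_pow, ← eta] at hroot
  have hη := eta_pos hlam hr
  have hr2 : r ^ 2 - 1 ≠ 0 := by nlinarith
  have hr1 : r + 1 ≠ 0 := by linarith
  have key : (r ^ 2 - 1) * eta lam r ^ 2 = 2 * lam * (r - 1) * eta lam r + 2 * log r := by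
    rw [hroot]; field_simp; ring
  unfold thetaRadicand
  field_simp
  linear_combination -key

lemma thetaRadicand_le_sq_sub_sq (hlam : 0 ≤ lam) (hη : 0 < η)
    (hroot : thetaRadicand lam η r = 0) (hy : 0 < y) (hyr : y ≤ r) :
    thetaRadicand lam η y ≤ r ^ 2 - y ^ 2 := by
  have hlam_term : 2 * lam * (y - 1) / η ≤ 2 * lam * (r - 1) / η := by gcongr
  have hlog_term : 2 * log y / η ^ 2 ≤ 2 * log r / η ^ 2 := by gcongr
  unfold thetaRadicand at hroot ⊢
  linarith

lemma mul_sub_le_thetaRadicand (hη : η ≠ 0) (hroot : thetaRadicand lam η r = 0)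
    (hy : y ∈ Ioc 1 r) : (y - 1) * (r - y) ≤ thetaRadicand lam η y := by
  obtain ⟨hy1, hyr⟩ := hy
  have hchord := antitoneOn_log_div_sub_one (hy1 : y ∈ Ioi 1) (hy1.trans_le hyr) hyr
  have hy1' : y - 1 ≠ 0 := by linarith
  have hr1 : r - 1 ≠ 0 := by linarith
  have hgap : thetaRadicand lam η y - (y - 1) * (r - y) =
      2 * (y - 1) / η ^ 2 * (log y / (y - 1) - log r / (r - 1)) := by
    unfold thetaRadicand at hroot ⊢
    field_simp at hroot ⊢
    linear_combination (y - 1) * hroot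
  have hgap_nonneg : 0 ≤ 2 * (y - 1) / η ^ 2 * (log y / (y - 1) - log r / (r - 1)) := by
    have := sub_nonneg.2 hchord
    have : 0 < y - 1 := by linarith
    positivity
  linarith

end ThetaRadicand

lemma rpow_neg_half_eq_inv_sqrt {x : ℝ} (hx : 0 ≤ x) : x ^ (-(1:ℝ)/2) = (√x)⁻¹ := by
  rw [neg_div, rpow_neg hx, sqrt_eq_rpow]

section ArcsinAffine

variable {a b : ℝ}

lemma hasDerivAt_arcsin_affine (hab : a < b) {y : ℝ} (hy : y ∈ Ioo a b) :
    HasDerivAt (fun x ↦ arcsin ((2 * x - a - b) / (b - a)))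
      (((y - a) * (b - y)) ^ (-(1:ℝ)/2)) y := by
  obtain ⟨hay, hyb⟩ := hy
  have hba : 0 < b - a := by linarith
  set u := (2 * y - a - b) / (b - a)
  have hu : 1 - u ^ 2 = (y - a) * (b - y) * (2 / (b - a)) ^ 2 := by
    simp only [u]; field_simp; ring
  have hu_sq : u ^ 2 < 1 := by
    have : 0 < (y - a) * (b - y) * (2 / (b - a)) ^ 2 := by
      have := mul_pos (sub_pos.2 hay) (sub_pos.2 hyb)
      positivity
    linarith
  have hu1 : u ≠ -1 := by rintro h; rw [h] at hu_sq; norm_num at hu_sq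
  have hu2 : u ≠ 1 := by rintro h; rw [h] at hu_sq; norm_num at hu_sq
  have hd := (hasDerivAt_arcsin hu1 hu2).comp y
    ((((hasDerivAt_id y).const_mul 2).sub_const a).sub_const b |>.div_const (b - a))
  refine hd.congr_deriv ?_
  have : 0 ≤ (y - a) * (b - y) := mul_nonneg (sub_nonneg.2 hay.le) (sub_nonneg.2 hyb.le)
  rw [hu, sqrt_mul this, sqrt_sq (by positivity), rpow_neg_half_eq_inv_sqrt this]
  field_simp

lemma continuous_arcsin_affine :
    Continuous (fun x ↦ arcsin ((2 * x - a - b) / (b - a))) := by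
  fun_prop

lemma integrableOn_rpow_neg_half_mul_sub (hab : a < b) :
    IntegrableOn (fun y ↦ ((y - a) * (b - y)) ^ (-(1:ℝ)/2)) (Ioc a b) :=
  integrableOn_deriv_of_nonneg continuous_arcsin_affine.continuousOn
    (fun _ hy ↦ hasDerivAt_arcsin_affine hab hy) fun _ hy ↦
      rpow_nonneg (mul_nonneg (sub_nonneg.2 hy.1.le) (sub_nonneg.2 hy.2.le)) _

lemma integral_rpow_neg_half_mul_sub (hab : a < b) {c d : ℝ} (hac : a ≤ c) (hcd : c ≤ d)
    (hdb : d ≤ b) :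
    ∫ y in c..d, ((y - a) * (b - y)) ^ (-(1:ℝ)/2) =
      arcsin ((2 * d - a - b) / (b - a)) - arcsin ((2 * c - a - b) / (b - a)) :=
  integral_eq_sub_of_hasDerivAt_of_le hcd continuous_arcsin_affine.continuousOn
    (fun _ hy ↦ hasDerivAt_arcsin_affine hab ⟨hac.trans_lt hy.1, hy.2.trans_le hdb⟩)
    ((intervalIntegrable_iff_integrableOn_Ioc_of_le hcd).2
      ((integrableOn_rpow_neg_half_mul_sub hab).mono_set (Ioc_subset_Ioc hac hdb)))

lemma intervalIntegrable_rpow_neg_half_of_mul_le {f : ℝ → ℝ} (hab : a < b)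
    (hf : ContinuousOn f (Ioo a b)) (hle : ∀ y ∈ Ioo a b, (y - a) * (b - y) ≤ f y) :
    IntervalIntegrable (fun y ↦ f y ^ (-(1:ℝ)/2)) volume a b := by
  have hpos : ∀ y ∈ Ioo a b, 0 < (y - a) * (b - y) :=
    fun y hy ↦ mul_pos (sub_pos.2 hy.1) (sub_pos.2 hy.2)
  rw [intervalIntegrable_iff_integrableOn_Ioo_of_le hab.le]
  refine ((integrableOn_rpow_neg_half_mul_sub hab).mono_set Ioo_subset_Ioc_self).mono' ?_ ?_
  · exact (hf.rpow_const fun y hy ↦ Or.inl ((hpos y hy).trans_le (hle y hy)).ne')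
      |>.aestronglyMeasurable measurableSet_Ioo
  · refine ae_restrict_of_forall_mem measurableSet_Ioo fun y hy ↦ ?_
    rw [norm_of_nonneg (rpow_nonneg ((hpos y hy).le.trans (hle y hy)) _)]
    exact rpow_le_rpow_of_nonpos (hpos y hy) (hle y hy) (by norm_num)

end ArcsinAffine

lemma integral_rpow_neg_half_sq_sub_sq {r : ℝ} (hr : 1 < r) :
    ∫ y in (1:ℝ)..r, (r ^ 2 - y ^ 2) ^ (-(1:ℝ)/2) = arccos (1 / r) := by
  have h := integral_rpow_neg_half_mul_sub (a := -r) (b := r) (by linarith) (by linarith) hr.le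
    le_rfl
  have hr0 : r ≠ 0 := by positivity
  rw [show (2 * r - -r - r) / (r - -r) = 1 by field_simp; ring,
    show (2 * 1 - -r - r) / (r - -r) = 1 / r by field_simp; ring, arcsin_one] at h
  simp_rw [show ∀ y : ℝ, (y - -r) * (r - y) = r ^ 2 - y ^ 2 from fun y ↦ by ring] at h
  rw [arccos_eq_pi_div_two_sub_arcsin, h]

lemma continuousOn_thetaRadicand (lam η : ℝ) : ContinuousOn (thetaRadicand lam η) (Ioi 0) := by
  have : ContinuousOn log (Ioi 0) := continuousOn_log.mono fun _ hx ↦ ne_of_gt hx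
  unfold thetaRadicand
  fun_prop

/-- The integrand of the semi-period Θ_λ(r) is bounded below by that of arcsec, and
consequently Θ_λ(r) ≥ arcsec(r) = arccos(1/r). -/
theorem theta_ge_arcsec (lam r : ℝ) (hlam : 0 ≤ lam) (hr : 1 < r) :
    let η : ℝ := lam / (r + 1) +
      Real.sqrt (lam ^ 2 / (r + 1) ^ 2 + 2 * Real.log r / (r ^ 2 - 1))
    (∀ y ∈ Set.Ioo (1 : ℝ) r,
        (1 - y ^ 2 + 2 * lam * (y - 1) / η + 2 * Real.log y / η ^ 2) ^ (-(1:ℝ)/2) ≥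
          (r ^ 2 - y ^ 2) ^ (-(1:ℝ)/2)) ∧
    (∫ y in (1:ℝ)..r,
        (1 - y ^ 2 + 2 * lam * (y - 1) / η + 2 * Real.log y / η ^ 2) ^ (-(1:ℝ)/2)) ≥
      Real.arccos (1 / r) := by
  intro η
  have hη : 0 < η := eta_pos hlam hr
  have hroot : thetaRadicand lam η r = 0 := thetaRadicand_eta_self hlam hr
  have hlow : ∀ y ∈ Ioo 1 r, (y - 1) * (r - y) ≤ thetaRadicand lam η y :=
    fun y hy ↦ mul_sub_le_thetaRadicand hη.ne' hroot (Ioo_subset_Ioc_self hy)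
  have hpoint : ∀ y ∈ Ioo 1 r,
      (r ^ 2 - y ^ 2) ^ (-(1:ℝ)/2) ≤ thetaRadicand lam η y ^ (-(1:ℝ)/2) :=
    fun y hy ↦ rpow_le_rpow_of_nonpos ((mul_pos (sub_pos.2 hy.1) (sub_pos.2 hy.2)).trans_le
      (hlow y hy)) (thetaRadicand_le_sq_sub_sq hlam hη hroot (by linarith [hy.1]) hy.2.le)
      (by norm_num)
  refine ⟨hpoint, ?_⟩
  rw [ge_iff_le, ← integral_rpow_neg_half_sq_sub_sq hr]
  refine integral_mono_on_of_le_Ioo hr.le ?_ ?_ hpoint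
  · exact intervalIntegrable_rpow_neg_half_of_mul_le hr (by fun_prop)
      fun y hy ↦ by nlinarith [hy.1, hy.2]
  · exact intervalIntegrable_rpow_neg_half_of_mul_le hr
      ((continuousOn_thetaRadicand lam η).mono fun y hy ↦ one_pos.trans hy.1) hlow
end

section
/- Let x : ℝ → ℝ² be a smooth unit-speed immersed curve with unit tangent t, inward unit normal n, and curvature κ, satisfying κ = ⟨x, n⟩ + λ for a constant λ. Then κ' = −κ⟨x, t⟩ (arc-length derivative), and consequently if κ vanishes at one point then κ ≡ 0; hence κ is identically zero or nowhere zero (the curve is a line or strictly locally convex). -/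
/-- Dot product on ℝ². -/
noncomputable def dot2 (a b : ℝ × ℝ) : ℝ := a.1 * b.1 + a.2 * b.2

/-- For a smooth unit-speed λ-curve (κ = ⟨x, n⟩ + λ), one has κ' = −κ⟨x, t⟩ along the
curve, and hence κ vanishes somewhere iff it vanishes identically: the curve is a line
or strictly locally convex. -/
theorem lambda_curve_line_or_convex (lam : ℝ) (x : ℝ → ℝ × ℝ) (κ : ℝ → ℝ)
    (hx : ContDiff ℝ (⊤ : ℕ∞) x)
    (hunit : ∀ s, dot2 (deriv x s) (deriv x s) = 1)
    -- n is the rotation of t = x' by π/2: n s = (-(x' s).2, (x' s).1)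
    (hFrenet : ∀ s, deriv (deriv x) s = κ s • (-(deriv x s).2, (deriv x s).1))
    (hlamcurve : ∀ s, κ s = dot2 (x s) (-(deriv x s).2, (deriv x s).1) + lam) :
    (∀ s, deriv κ s = -κ s * dot2 (x s) (deriv x s)) ∧
      ((∃ s₀, κ s₀ = 0) → ∀ s, κ s = 0) := by
  have hdx : Differentiable ℝ x := hx.differentiable (by simp)
  have hx9 : ContDiff ℝ (↑(⊤ : ℕ∞)) x := hx.of_le (by simp)
  have hdx' : Differentiable ℝ (deriv x) :=
    (contDiff_infty_iff_deriv.mp (contDiff_infty_iff_deriv.mp hx9).2).1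
  have hκeq : ∀ t, κ t = (x t).1 * (-(deriv x t).2) + (x t).2 * (deriv x t).1 + lam := by
    intro t
    rw [hlamcurve t]
    simp [dot2]
  have key : ∀ s, HasDerivAt κ (-κ s * dot2 (x s) (deriv x s)) s := by
    intro s
    have h1 : HasDerivAt x (deriv x s) s := (hdx s).hasDerivAt
    have h2 : HasDerivAt (deriv x) (deriv (deriv x) s) s := (hdx' s).hasDerivAt
    have p1 : HasDerivAt (fun t => (x t).1) (deriv x s).1 s := by
      exact (hasFDerivAt_fst.comp_hasDerivAt s h1)
    have p2 : HasDerivAt (fun t => (x t).2) (deriv x s).2 s := by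
      exact (hasFDerivAt_snd.comp_hasDerivAt s h1)
    have q1 : HasDerivAt (fun t => (deriv x t).1) (deriv (deriv x) s).1 s := by
      exact (hasFDerivAt_fst.comp_hasDerivAt s h2)
    have q2 : HasDerivAt (fun t => (deriv x t).2) (deriv (deriv x) s).2 s := by
      exact (hasFDerivAt_snd.comp_hasDerivAt s h2)
    have hD : HasDerivAt (fun t => (x t).1 * (-(deriv x t).2) + (x t).2 * (deriv x t).1 + lam)
        ((deriv x s).1 * (-(deriv x s).2) + (x s).1 * (-(deriv (deriv x) s).2)
          + ((deriv x s).2 * (deriv x s).1 + (x s).2 * (deriv (deriv x) s).1)) s :=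
      ((p1.mul q2.neg).add (p2.mul q1)).add_const lam
    have hEq : ((deriv x s).1 * (-(deriv x s).2) + (x s).1 * (-(deriv (deriv x) s).2)
          + ((deriv x s).2 * (deriv x s).1 + (x s).2 * (deriv (deriv x) s).1))
        = -κ s * dot2 (x s) (deriv x s) := by
      have h3 := hFrenet s
      have h31 : (deriv (deriv x) s).1 = κ s * (-(deriv x s).2) := by rw [h3]; rfl
      have h32 : (deriv (deriv x) s).2 = κ s * (deriv x s).1 := by rw [h3]; rfl
      rw [h31, h32]
      simp [dot2]
      ring
    have hD' := hEq ▸ hD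
    exact hD'.congr_of_eventuallyEq (Filter.Eventually.of_forall fun t => hκeq t)
  refine ⟨fun s => (key s).deriv, ?_⟩
  rintro ⟨s₀, hs₀⟩ s
  set a : ℝ := min s s₀ - 1 with ha
  set b : ℝ := max s s₀ + 1 with hb
  have hab : a ≤ b := by
    have : min s s₀ ≤ max s s₀ := le_trans (min_le_left _ _) (le_max_left _ _)
    simp only [ha, hb]; linarith
  have hg_cont : Continuous fun t => dot2 (x t) (deriv x t) := by
    unfold dot2
    fun_prop
  obtain ⟨C, hC⟩ := (isCompact_Icc (a := a) (b := b)).exists_bound_of_continuousOn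
    hg_cont.continuousOn
  set K : NNReal := ⟨max C 0, le_max_right _ _⟩ with hK
  set v : ℝ → ℝ → ℝ := fun t y => -(dot2 (x (max a (min b t))) (deriv x (max a (min b t)))) * y
    with hv_def
  have hclamp : ∀ t, max a (min b t) ∈ Set.Icc a b := by
    intro t
    constructor
    · exact le_max_left _ _
    · exact max_le hab (min_le_left _ _)
  have hv : ∀ t, LipschitzWith K (v t) := by
    intro t
    apply LipschitzWith.of_dist_le_mul
    intro y z
    simp only [hv_def, Real.dist_eq]
    rw [← mul_sub, abs_mul, abs_neg]
    have h1 : |dot2 (x (max a (min b t))) (deriv x (max a (min b t)))| ≤ (K : ℝ) := by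
      have := hC _ (hclamp t)
      simp only [Real.norm_eq_abs] at this
      exact le_trans this (le_max_left _ _)
    exact mul_le_mul_of_nonneg_right h1 (abs_nonneg _)
  have hv' : ∀ t, LipschitzOnWith K (v t) Set.univ := fun t => (hv t).lipschitzOnWith
  have hclamp_eq : ∀ t ∈ Set.Icc a b, max a (min b t) = t := by
    intro t ht
    rw [min_eq_right ht.2, max_eq_right ht.1]
  have hκcont : Continuous κ := by
    apply Differentiable.continuous (𝕜 := ℝ)
    exact fun t => (key t).differentiableAt
  have ht₀ : s₀ ∈ Set.Ioo a b := by
    have h1 := min_le_right s s₀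
    have h2 := le_max_right s s₀
    constructor <;> simp only [ha, hb] <;> linarith
  have hmem : s ∈ Set.Icc a b := by
    have h1 := min_le_left s s₀
    have h2 := le_max_left s s₀
    constructor <;> simp only [ha, hb] <;> linarith
  have main := ODE_solution_unique_of_mem_Icc (fun t _ => hv' t) ht₀ hκcont.continuousOn
    (fun t ht => by
      have hk := key t
      have hc := hclamp_eq t (Set.mem_Icc_of_Ioo ht)
      rw [hv_def]
      simp only [hc]
      convert hk using 1
      · rfl
      · rfl
      · ring)
    (fun t _ => Set.mem_univ _)
    (continuousOn_const (c := (0:ℝ)))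
    (fun t ht => by
      simpa [hv_def] using hasDerivAt_const t (0:ℝ))
    (fun t _ => Set.mem_univ _)
    hs₀
  exact main hmem
end
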